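/- arXiv:2007.12877 — 2 statements merged into one kernel-verified Lean document; each statement's English description precedes it below -/
import Mathlib

section
/- Fix γ ∈ (0,1) and 0 < T < T_c(γ). If x_u = (1 + √(1-2T))/2, then x_u > (1+γ)/2 and f(x_u; T) = g_γ(√(1-2T)) > 0, where f(x;T) = 2x - (1+γ) - T·ln(x/(1-x)) and g_γ(u) = u - γ - ((1-u²)/2)·ln((1+u)/(1-u)). -/
/-
The map g(u) = u - γ - ((1 - u²)/2) log((1 + u)/(1 - u)) has derivative u log((1 + u)/(1 - u)) > 0,
so it is strictly increasing on [0, 1). With u = √(1 - 2T) one has T = (1 - u²)/2 and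
x_u/(1 - x_u) = (1 + u)/(1 - u), so f(x_u; T) = g(u). The critical temperature corresponds to
u_c = √(1 - 2T_c) with g(u_c) = 0, and T < T_c means u > u_c; hence g(u) > 0. Finally
g(u_c) = 0 reads u_c - γ = T_c log((1 + u_c)/(1 - u_c)) > 0, so u > u_c > γ.
-/

open Real Set

lemma hasDerivAt_log_one_add_div_one_sub {x : ℝ} (hx : x ∈ Ioo (-1 : ℝ) 1) :
    HasDerivAt (fun x => log ((1 + x) / (1 - x))) (2 / (1 - x ^ 2)) x := by
  have hp : 1 + x ≠ 0 := by linarith [hx.1]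
  have hm : 1 - x ≠ 0 := by linarith [hx.2]
  have hx2 : 1 - x ^ 2 ≠ 0 := by nlinarith [hx.1, hx.2]
  refine ((((hasDerivAt_id' x).const_add 1).fun_div ((hasDerivAt_id' x).const_sub 1) hm).log
    (div_ne_zero hp hm)).congr_deriv ?_
  field_simp
  ring

lemma log_one_add_div_one_sub_pos {u : ℝ} (hu : u ∈ Ioo (0 : ℝ) 1) :
    0 < log ((1 + u) / (1 - u)) :=
  log_pos <| (one_lt_div (by linarith [hu.2])).2 (by linarith [hu.1])

lemma hasDerivAt_sub_mul_log_one_add_div_one_sub (γ : ℝ) {x : ℝ} (hx : x ∈ Ioo (-1 : ℝ) 1) :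
    HasDerivAt (fun u => u - γ - ((1 - u ^ 2) / 2) * log ((1 + u) / (1 - u)))
      (x * log ((1 + x) / (1 - x))) x := by
  have hq : HasDerivAt (fun u : ℝ => (1 - u ^ 2) / 2) (-x) x :=
    (((hasDerivAt_pow 2 x).const_sub 1).div_const 2).congr_deriv (by norm_num; ring)
  refine (((hasDerivAt_id' x).sub_const γ).fun_sub
    (hq.fun_mul (hasDerivAt_log_one_add_div_one_sub hx))).congr_deriv ?_
  have hx2 : 1 - x ^ 2 ≠ 0 := by nlinarith [hx.1, hx.2]
  have hcancel : (1 - x ^ 2) / 2 * (2 / (1 - x ^ 2)) = 1 := by field_simp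
  rw [hcancel]
  ring

lemma strictMonoOn_sub_mul_log_one_add_div_one_sub (γ : ℝ) :
    StrictMonoOn (fun u => u - γ - ((1 - u ^ 2) / 2) * log ((1 + u) / (1 - u))) (Ico 0 1) := by
  have hderiv (x : ℝ) (hx : x ∈ Ico (0 : ℝ) 1) :=
    hasDerivAt_sub_mul_log_one_add_div_one_sub γ (x := x) ⟨by linarith [hx.1], hx.2⟩
  refine strictMonoOn_of_deriv_pos (convex_Ico 0 1)
    (fun x hx => (hderiv x hx).continuousAt.continuousWithinAt) fun x hx => ?_
  rw [interior_Ico] at hx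
  rw [(hderiv x (Ioo_subset_Ico_self hx)).deriv]
  exact mul_pos hx.1 (log_one_add_div_one_sub_pos hx)

theorem stmt_14_general (γ T Tc : ℝ)
    (hTc : Tc ∈ Set.Ioo (0:ℝ) (1/2))
    (hTceq : Real.sqrt (1 - 2 * Tc) - γ -
      Tc * Real.log ((1 + Real.sqrt (1 - 2 * Tc)) / (1 - Real.sqrt (1 - 2 * Tc))) = 0)
    (hT : 0 < T) (hTlt : T < Tc)
    (f : ℝ → ℝ → ℝ)
    (hf : ∀ x T', f x T' = 2 * x - (1 + γ) - T' * Real.log (x / (1 - x)))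
    (g : ℝ → ℝ)
    (hg : ∀ u, g u = u - γ - ((1 - u ^ 2) / 2) * Real.log ((1 + u) / (1 - u)))
    (xu : ℝ) (hxu : xu = (1 + Real.sqrt (1 - 2 * T)) / 2) :
    xu > (1 + γ) / 2 ∧
    f xu T = g (Real.sqrt (1 - 2 * T)) ∧
    0 < g (Real.sqrt (1 - 2 * T)) := by
  obtain ⟨hTc0, hTc2⟩ := hTc
  set u := √(1 - 2 * T)
  set v := √(1 - 2 * Tc)
  have hT_eq : T = (1 - u ^ 2) / 2 := by rw [sq_sqrt (by linarith)]; ring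
  have hTc_eq : Tc = (1 - v ^ 2) / 2 := by rw [sq_sqrt (by linarith)]; ring
  have hv : v ∈ Ioo 0 1 := ⟨sqrt_pos.2 (by linarith), by nlinarith [sqrt_nonneg (1 - 2 * Tc)]⟩
  have hu : u ∈ Ioo 0 1 := ⟨sqrt_pos.2 (by linarith), by nlinarith [sqrt_nonneg (1 - 2 * T)]⟩
  have hvu : v < u := sqrt_lt_sqrt (by linarith) (by linarith)
  have hγv : γ < v := by nlinarith [mul_pos hTc0 (log_one_add_div_one_sub_pos hv)]
  have hgv : g v = 0 := by rw [hg, ← hTc_eq, hTceq]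
  have hodds : xu / (1 - xu) = (1 + u) / (1 - u) := by
    rw [hxu, show 1 - (1 + u) / 2 = (1 - u) / 2 by ring, div_div_div_cancel_right₀ two_ne_zero]
  refine ⟨by rw [hxu]; linarith, ?_, ?_⟩
  · rw [hf, hg, hodds, hxu, ← hT_eq]
    ring
  · rw [← hgv, hg, hg]
    exact strictMonoOn_sub_mul_log_one_add_div_one_sub γ ⟨hv.1.le, hv.2⟩ ⟨hu.1.le, hu.2⟩ hvu

theorem stmt_14 (γ T Tc : ℝ) (hγ : γ ∈ Set.Ioo (0:ℝ) 1)
    (hTc : Tc ∈ Set.Ioo (0:ℝ) (1/2))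
    (hTceq : Real.sqrt (1 - 2 * Tc) - γ -
      Tc * Real.log ((1 + Real.sqrt (1 - 2 * Tc)) / (1 - Real.sqrt (1 - 2 * Tc))) = 0)
    (hT : 0 < T) (hTlt : T < Tc)
    (f : ℝ → ℝ → ℝ)
    (hf : ∀ x T', f x T' = 2 * x - (1 + γ) - T' * Real.log (x / (1 - x)))
    (g : ℝ → ℝ)
    (hg : ∀ u, g u = u - γ - ((1 - u ^ 2) / 2) * Real.log ((1 + u) / (1 - u)))
    (xu : ℝ) (hxu : xu = (1 + Real.sqrt (1 - 2 * T)) / 2) :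
    xu > (1 + γ) / 2 ∧
    f xu T = g (Real.sqrt (1 - 2 * T)) ∧
    0 < g (Real.sqrt (1 - 2 * T)) :=
  stmt_14_general γ T Tc hTc hTceq hT hTlt f hf g hg xu hxu
end

section
/- Fix γ ∈ (0,1), an integer α ≥ 3, and T ≥ 1/2. Then the function f_α(x) = x^(α-1) - (1-x)^(α-1) - γ - T·ln(x/(1-x)) is nonincreasing on (0,1), satisfies f_α(x) → +∞ as x → 0⁺ and f_α(1/2) = -γ < 0, and has exactly one zero, which lies in (0, 1/2). -/
/-!
With `n = α - 1`, `f' = n (x^(n-1) + (1-x)^(n-1)) - T / (x (1-x))`, so `f' < 0` away from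
`x = 1/2` amounts to `n (x^n (1-x) + x (1-x)^n) < 1/2`. By the symmetry `x ↦ 1 - x` take
`x < 1/2`: for `n ≥ 4` the first term is at most `1/8`, and the second is
`n x (1-x)^n ≤ n x e^(-n x) ≤ 1/e < 3/8`; the cases `n = 2, 3` are polynomial inequalities.
So `f` is strictly decreasing on `(0, 1)`; as `f → +∞` at `0⁺` and `f (1/2) = -γ < 0`, the
intermediate value theorem gives its unique zero, in `(0, 1/2)`.
-/

open Real Set Filter Topology

theorem nat_mul_mul_one_sub_pow_le_exp_neg_one {x : ℝ} (hx0 : 0 ≤ x) (hx1 : x ≤ 1) (n : ℕ) :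
    n * x * (1 - x) ^ n ≤ exp (-1) :=
  calc n * x * (1 - x) ^ n ≤ n * x * exp (-x) ^ n := by
        gcongr
        exact one_sub_le_exp_neg x
    _ = n * x * exp (-(n * x)) := by rw [← exp_nat_mul]; ring_nf
    _ ≤ exp (-1) := mul_exp_neg_le_exp_neg_one _

theorem nat_mul_pow_mul_one_sub_le {n : ℕ} (hn : 4 ≤ n) {x : ℝ} (hx0 : 0 ≤ x) (hx : x ≤ 1 / 2) :
    n * x ^ n * (1 - x) ≤ 1 / 8 := by
  obtain ⟨k, rfl⟩ : ∃ k, n = k + 4 := ⟨n - 4, by omega⟩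
  have hk : ((k + 4 : ℕ) : ℝ) ≤ 2 ^ (k + 2) := by
    have hk_lt := Nat.lt_two_pow_self (n := k)
    exact_mod_cast (by rw [pow_add]; omega : k + 4 ≤ 2 ^ (k + 2))
  have hpow : x ^ (k + 3) ≤ (1 / 2) ^ (k + 3) := by gcongr
  have hquad : x * (1 - x) ≤ 1 / 4 := by nlinarith [sq_nonneg (x - 1 / 2)]
  calc ((k + 4 : ℕ) : ℝ) * x ^ (k + 4) * (1 - x)
      = ((k + 4 : ℕ) : ℝ) * x ^ (k + 3) * (x * (1 - x)) := by ring
    _ ≤ 2 ^ (k + 2) * (1 / 2) ^ (k + 3) * (1 / 4) := by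
        gcongr
        nlinarith
    _ = 1 / 8 := by ring_nf; rw [← mul_pow]; norm_num

theorem nat_mul_pow_mul_one_sub_add_lt_half {n : ℕ} (hn : 2 ≤ n) {x : ℝ} (hx0 : 0 < x)
    (hx : x < 1 / 2) : n * (x ^ n * (1 - x) + x * (1 - x) ^ n) < 1 / 2 := by
  obtain rfl | rfl | hn4 : n = 2 ∨ n = 3 ∨ 4 ≤ n := by omega
  · nlinarith [mul_pos (sub_pos.2 hx) (sub_pos.2 hx)]
  · have hp : x * (1 - x) < 1 / 4 := by nlinarith [mul_pos (sub_pos.2 hx) (sub_pos.2 hx)]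
    nlinarith [mul_pos hx0 (show 0 < 1 - x by linarith)]
  · have hsmall := nat_mul_pow_mul_one_sub_le hn4 hx0.le hx.le
    have hlarge := nat_mul_mul_one_sub_pow_le_exp_neg_one hx0.le (by linarith) n
    have he : exp (-1) < 3 / 8 := lt_trans exp_neg_one_lt_d9 (by norm_num)
    linarith

theorem nat_mul_pow_mul_one_sub_add_lt_half_of_ne {n : ℕ} (hn : 2 ≤ n) {x : ℝ}
    (hx : x ∈ Ioo 0 1) (hne : x ≠ 1 / 2) :
    n * (x ^ n * (1 - x) + x * (1 - x) ^ n) < 1 / 2 := by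
  rcases hne.lt_or_gt with hlt | hgt
  · exact nat_mul_pow_mul_one_sub_add_lt_half hn hx.1 hlt
  · have := nat_mul_pow_mul_one_sub_add_lt_half hn (x := 1 - x) (by linarith [hx.2]) (by linarith)
    rw [sub_sub_cancel] at this
    linarith

noncomputable def drift (n : ℕ) (γ T x : ℝ) : ℝ :=
  x ^ n - (1 - x) ^ n - γ - T * log (x / (1 - x))

namespace drift

variable {n : ℕ} {γ T : ℝ}

theorem hasDerivAt {x : ℝ} (hx : x ∈ Ioo 0 1) :
    HasDerivAt (drift n γ T)
      (n * (x ^ (n - 1) + (1 - x) ^ (n - 1)) - T / (x * (1 - x))) x := by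
  have hx0 : x ≠ 0 := hx.1.ne'
  have hx1 : 1 - x ≠ 0 := (sub_pos.2 hx.2).ne'
  have hsub : HasDerivAt (fun y : ℝ => 1 - y) (-1) x := by
    simpa using (hasDerivAt_id x).const_sub 1
  have hratio := ((hasDerivAt_id x).div hsub hx1).log (div_ne_zero hx0 hx1)
  refine HasDerivAt.congr_deriv (f := drift n γ T)
    ((((hasDerivAt_pow n x).sub ((hasDerivAt_pow n (1 - x)).comp x hsub)).sub_const γ).sub
      (hratio.const_mul T)) ?_
  simp only [Pi.div_apply, id]
  field_simp
  ring

theorem deriv_neg (hn : 2 ≤ n) (hT : 1 / 2 ≤ T) {x : ℝ} (hx : x ∈ Ioo 0 1) (hne : x ≠ 1 / 2) :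
    deriv (drift n γ T) x < 0 := by
  rw [(hasDerivAt hx).deriv, sub_neg, lt_div_iff₀ (mul_pos hx.1 (sub_pos.2 hx.2))]
  obtain ⟨m, rfl⟩ : ∃ m, n = m + 1 := ⟨n - 1, by omega⟩
  have key := nat_mul_pow_mul_one_sub_add_lt_half_of_ne hn hx hne
  simp only [add_tsub_cancel_right, pow_succ] at key ⊢
  nlinarith

theorem continuousOn : ContinuousOn (drift n γ T) (Ioo 0 1) :=
  fun _ hx => (hasDerivAt hx).continuousAt.continuousWithinAt

theorem strictAntiOn (hn : 2 ≤ n) (hT : 1 / 2 ≤ T) : StrictAntiOn (drift n γ T) (Ioo 0 1) := by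
  have hhalf : (1 / 2 : ℝ) ∈ Ioo 0 1 := by norm_num
  rw [← Ioc_union_Ico_eq_Ioo hhalf.1 hhalf.2]
  refine StrictAntiOn.union ?_ ?_ (isGreatest_Ioc hhalf.1) (isLeast_Ico hhalf.2)
  · refine strictAntiOn_of_deriv_neg (convex_Ioc _ _)
      (continuousOn.mono (Ioc_subset_Ioo_right hhalf.2)) fun x hx => ?_
    rw [interior_Ioc] at hx
    exact deriv_neg hn hT ⟨hx.1, hx.2.trans hhalf.2⟩ hx.2.ne
  · refine strictAntiOn_of_deriv_neg (convex_Ico _ _)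
      (continuousOn.mono (Ico_subset_Ioo_left hhalf.1)) fun x hx => ?_
    rw [interior_Ico] at hx
    exact deriv_neg hn hT ⟨hhalf.1.trans hx.1, hx.2⟩ hx.1.ne'

theorem apply_half : drift n γ T (1 / 2) = -γ := by
  norm_num [drift]

theorem tendsto_nhdsGT_zero (hT : 0 < T) : Tendsto (drift n γ T) (𝓝[>] 0) atTop := by
  have hratio : Tendsto (fun x : ℝ => x / (1 - x)) (𝓝[>] 0) (𝓝[>] 0) := by
    refine tendsto_nhdsWithin_of_tendsto_nhds_of_eventually_within _ ?_ ?_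
    · refine tendsto_nhdsWithin_of_tendsto_nhds ?_
      have : ContinuousAt (fun x : ℝ => x / (1 - x)) 0 := by fun_prop (disch := norm_num)
      simpa using this.tendsto
    · filter_upwards [Ioo_mem_nhdsGT one_pos] with x hx
      exact div_pos hx.1 (sub_pos.2 hx.2)
  have hpoly : Tendsto (fun x : ℝ => x ^ n - (1 - x) ^ n - γ) (𝓝[>] 0) (𝓝 (0 ^ n - 1 - γ)) := by
    refine tendsto_nhdsWithin_of_tendsto_nhds ?_
    simpa using (by fun_prop : Continuous fun x : ℝ => x ^ n - (1 - x) ^ n - γ).tendsto 0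
  exact hpoly.add_atTop (tendsto_neg_atBot_atTop.comp
    ((tendsto_log_nhdsGT_zero.comp hratio).const_mul_atBot hT))

theorem exists_zero (hγ : 0 < γ) (hT : 0 < T) : ∃ x ∈ Ioo 0 (1 / 2), drift n γ T x = 0 := by
  obtain ⟨a, hfa, ha⟩ := ((tendsto_nhdsGT_zero hT).eventually_gt_atTop 0).and
    (Ioo_mem_nhdsGT (by norm_num : (0 : ℝ) < 1 / 2)) |>.exists
  obtain ⟨x, hx, hfx⟩ := intermediate_value_Ioo' (f := drift n γ T) ha.2.le
    (continuousOn.mono (Icc_subset_Ioo ha.1 (by norm_num))) ⟨by rw [apply_half]; linarith, hfa⟩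
  exact ⟨x, ⟨ha.1.trans hx.1, hx.2⟩, hfx⟩

end drift

theorem stmt_19 (γ T : ℝ) (α : ℕ) (hγ : γ ∈ Set.Ioo (0:ℝ) 1)
    (hα : 3 ≤ α) (hT : (1:ℝ)/2 ≤ T)
    (f : ℝ → ℝ)
    (hf : ∀ x, f x = x ^ (α - 1) - (1 - x) ^ (α - 1) - γ - T * Real.log (x / (1 - x))) :
    AntitoneOn f (Set.Ioo (0:ℝ) 1) ∧
    Filter.Tendsto f (nhdsWithin 0 (Set.Ioi 0)) Filter.atTop ∧
    (f (1/2) = -γ ∧ -γ < 0) ∧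
    ∃ x₀ ∈ Set.Ioo (0:ℝ) (1/2), f x₀ = 0 ∧
      ∀ x ∈ Set.Ioo (0:ℝ) 1, f x = 0 → x = x₀ := by
  obtain rfl : f = drift (α - 1) γ T := funext hf
  have hT0 : 0 < T := by linarith
  have hanti := drift.strictAntiOn (γ := γ) (by omega : 2 ≤ α - 1) hT
  obtain ⟨x₀, hx₀, hzero⟩ := drift.exists_zero (n := α - 1) hγ.1 hT0
  refine ⟨hanti.antitoneOn, drift.tendsto_nhdsGT_zero hT0, ⟨drift.apply_half, neg_lt_zero.2 hγ.1⟩,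
    x₀, hx₀, hzero, fun x hx hfx => ?_⟩
  exact hanti.injOn hx (Ioo_subset_Ioo_right (by norm_num) hx₀) (hfx.trans hzero.symm)
end
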